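/- Let H be a bialgebra, A an algebra in ℒℛ(H), and 𝒜 an H-bimodule algebra. Equip 𝒜 ♮ A with the H-bimodule algebra structure h·(φ ♮ a) = h₁·φ ♮ h₂·a, (φ ♮ a)·h = φ·h₂ ♮ a·h₁, and equip A ♮ H with the H-bicomodule algebra structure λ(a ♮ h) = a^{(-1)}h₁ ⊗ (a^{(0)} ♮ h₂), ρ(a ♮ h) = (a^{<0>} ♮ h₁) ⊗ h₂a^{<1>}. Then the algebras (𝒜 ♮ A) ♮ H and 𝒜 ♮ (A ♮ H) coincide under the obvious identification of underlying vector spaces. -/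
import Mathlib


open TensorProduct

noncomputable section

namespace LR

variable {k : Type*} [Field k]

section Toolbox

variable {X Y Z W X' Y' : Type*}
  [AddCommGroup X] [Module k X] [AddCommGroup Y] [Module k Y]
  [AddCommGroup Z] [Module k Z] [AddCommGroup W] [Module k W]
  [AddCommGroup X'] [Module k X'] [AddCommGroup Y'] [Module k Y']

/-- Expand the first tensor factor using `f : X →ₗ X' ⊗ Y'`. -/
def expand (f : X →ₗ[k] X' ⊗[k] Y') : X ⊗[k] Z →ₗ[k] X' ⊗[k] (Y' ⊗[k] Z) :=
  (TensorProduct.assoc k X' Y' Z).toLinearMap ∘ₗ (TensorProduct.map f LinearMap.id)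

/-- Apply `f` to the first two factors of a right-nested triple tensor. -/
def app2 (f : X ⊗[k] Y →ₗ[k] X' ⊗[k] Y') :
    X ⊗[k] (Y ⊗[k] Z) →ₗ[k] X' ⊗[k] (Y' ⊗[k] Z) :=
  (TensorProduct.assoc k X' Y' Z).toLinearMap ∘ₗ (TensorProduct.map f LinearMap.id)
    ∘ₗ (TensorProduct.assoc k X Y Z).symm.toLinearMap

/-- Contract the first two factors of a right-nested triple tensor with `m`. -/
def con2 (m : X ⊗[k] Y →ₗ[k] W) : X ⊗[k] (Y ⊗[k] Z) →ₗ[k] W ⊗[k] Z :=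
  (TensorProduct.map m LinearMap.id) ∘ₗ (TensorProduct.assoc k X Y Z).symm.toLinearMap

/-- Swap the first two factors of a right-nested triple tensor. -/
def swL : X ⊗[k] (Y ⊗[k] Z) →ₗ[k] Y ⊗[k] (X ⊗[k] Z) :=
  (TensorProduct.assoc k Y X Z).toLinearMap
    ∘ₗ (TensorProduct.map (TensorProduct.comm k X Y).toLinearMap LinearMap.id)
    ∘ₗ (TensorProduct.assoc k X Y Z).symm.toLinearMap

/-- Exchange the second and third factors of `(X ⊗ Y) ⊗ Z`. -/
def ex23 : (X ⊗[k] Y) ⊗[k] Z →ₗ[k] (X ⊗[k] Z) ⊗[k] Y :=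
  (TensorProduct.assoc k X Z Y).symm.toLinearMap
    ∘ₗ (TensorProduct.map LinearMap.id (TensorProduct.comm k Y Z).toLinearMap)
    ∘ₗ (TensorProduct.assoc k X Y Z).toLinearMap

/-- The componentwise multiplication on a tensor product of two
(not necessarily unital) multiplications. -/
def tensMul (m₁ : X ⊗[k] X →ₗ[k] X) (m₂ : Y ⊗[k] Y →ₗ[k] Y) :
    (X ⊗[k] Y) ⊗[k] (X ⊗[k] Y) →ₗ[k] X ⊗[k] Y :=
  (TensorProduct.map m₁ m₂) ∘ₗ (tensorTensorTensorComm k X Y X Y).toLinearMap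

end Toolbox

section LRPair

variable {A B : Type*} [AddCommGroup A] [Module k A] [AddCommGroup B] [Module k B]

/-- `x ⊗ y ↦ Σ x·a'_S ⊗ y_S` where `S(y ⊗ a') = a'_S ⊗ y_S`. -/
def rext (mA : A ⊗[k] A →ₗ[k] A) (S : B ⊗[k] A →ₗ[k] A ⊗[k] B) (a' : A) :
    A ⊗[k] B →ₗ[k] A ⊗[k] B :=
  (TensorProduct.map mA LinearMap.id)
    ∘ₗ (TensorProduct.assoc k A A B).symm.toLinearMap
    ∘ₗ (TensorProduct.map LinearMap.id (S ∘ₗ (TensorProduct.mk k B A).flip a'))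

/-- `x ⊗ y ↦ Σ x_S ⊗ b_S · y` where `S(b ⊗ x) = x_S ⊗ b_S`. -/
def lext (mB : B ⊗[k] B →ₗ[k] B) (S : B ⊗[k] A →ₗ[k] A ⊗[k] B) (b : B) :
    A ⊗[k] B →ₗ[k] A ⊗[k] B :=
  (TensorProduct.map LinearMap.id mB)
    ∘ₗ (TensorProduct.assoc k A B B).toLinearMap
    ∘ₗ (TensorProduct.map (S ∘ₗ (TensorProduct.mk k B A) b) LinearMap.id)

/-- `x ⊗ y ↦ Σ a_S · x ⊗ y_S` where `S(a ⊗ y) = a_S ⊗ y_S`. -/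
def qlext (mA : A ⊗[k] A →ₗ[k] A) (S : A ⊗[k] B →ₗ[k] A ⊗[k] B) (a : A) :
    A ⊗[k] B →ₗ[k] A ⊗[k] B :=
  (TensorProduct.map (mA ∘ₗ (TensorProduct.comm k A A).toLinearMap) LinearMap.id)
    ∘ₗ (TensorProduct.assoc k A A B).symm.toLinearMap
    ∘ₗ (TensorProduct.map LinearMap.id (S ∘ₗ (TensorProduct.mk k A B) a))

/-- `x ⊗ y ↦ Σ x_S ⊗ y · b'_S` where `S(x ⊗ b') = x_S ⊗ b'_S`. -/
def qrext (mB : B ⊗[k] B →ₗ[k] B) (S : A ⊗[k] B →ₗ[k] A ⊗[k] B) (b' : B) :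
    A ⊗[k] B →ₗ[k] A ⊗[k] B :=
  (TensorProduct.map LinearMap.id (mB ∘ₗ (TensorProduct.comm k B B).toLinearMap))
    ∘ₗ (TensorProduct.assoc k A B B).toLinearMap
    ∘ₗ (TensorProduct.map (S ∘ₗ (TensorProduct.mk k A B).flip b') LinearMap.id)

/-- `x ⊗ y ↦ Σ y ⊗ S(x ⊗ b')`. -/
def swQ (S : A ⊗[k] B →ₗ[k] A ⊗[k] B) (b' : B) :
    A ⊗[k] B →ₗ[k] B ⊗[k] (A ⊗[k] B) :=
  (TensorProduct.map LinearMap.id S)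
    ∘ₗ (TensorProduct.map LinearMap.id ((TensorProduct.mk k A B).flip b'))
    ∘ₗ (TensorProduct.comm k A B).toLinearMap

/-- `x ⊗ y ↦ Σ v ⊗ (u ⊗ y)` where `S(b ⊗ x) = u ⊗ v`. -/
def swR (S : B ⊗[k] A →ₗ[k] A ⊗[k] B) (b : B) :
    A ⊗[k] B →ₗ[k] B ⊗[k] (A ⊗[k] B) :=
  (TensorProduct.assoc k B A B).toLinearMap
    ∘ₗ (TensorProduct.map (TensorProduct.comm k A B).toLinearMap LinearMap.id)
    ∘ₗ (TensorProduct.map (S ∘ₗ (TensorProduct.mk k B A) b) LinearMap.id)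

/-- `x ⊗ y ↦ Σ x ⊗ (v ⊗ u)` where `S(a' ⊗ y) = u ⊗ v`. -/
def swQ2 (S : A ⊗[k] B →ₗ[k] A ⊗[k] B) (a' : A) :
    A ⊗[k] B →ₗ[k] A ⊗[k] (B ⊗[k] A) :=
  TensorProduct.map LinearMap.id
    ((TensorProduct.comm k A B).toLinearMap ∘ₗ S ∘ₗ (TensorProduct.mk k A B) a')

/-- `x ⊗ y ↦ Σ u ⊗ (v ⊗ x)` where `S(y ⊗ a) = u ⊗ v`. -/
def swR2 (S : B ⊗[k] A →ₗ[k] A ⊗[k] B) (a : A) :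
    A ⊗[k] B →ₗ[k] A ⊗[k] (B ⊗[k] A) :=
  (TensorProduct.assoc k A B A).toLinearMap
    ∘ₗ (TensorProduct.map (S ∘ₗ (TensorProduct.mk k B A).flip a) LinearMap.id)
    ∘ₗ (TensorProduct.comm k A B).toLinearMap

/-- `(a ⊗ b) ⊗ (a' ⊗ b') ↦ (a ⊗ b') ⊗ (b ⊗ a')`. -/
def lrRearr : (A ⊗[k] B) ⊗[k] (A ⊗[k] B) →ₗ[k] (A ⊗[k] B) ⊗[k] (B ⊗[k] A) :=
  (tensorTensorTensorComm k A B B A).toLinearMap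
    ∘ₗ (TensorProduct.map LinearMap.id (TensorProduct.comm k A B).toLinearMap)

/-- The multiplication of the L-R-twisted tensor product:
`(a ⊗ b)(a' ⊗ b') = a_Q a'_R ⊗ b_R b'_Q`. -/
def lrMulGen (mA : A ⊗[k] A →ₗ[k] A) (mB : B ⊗[k] B →ₗ[k] B)
    (Q : A ⊗[k] B →ₗ[k] A ⊗[k] B) (R : B ⊗[k] A →ₗ[k] A ⊗[k] B) :
    (A ⊗[k] B) ⊗[k] (A ⊗[k] B) →ₗ[k] A ⊗[k] B :=
  (TensorProduct.map mA (mB ∘ₗ (TensorProduct.comm k B B).toLinearMap))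
    ∘ₗ (tensorTensorTensorComm k A B A B).toLinearMap
    ∘ₗ (TensorProduct.map Q R) ∘ₗ lrRearr

/-- `R : B ⊗ A → A ⊗ B` is a twisting map (w.r.t. the given multiplications
and units). -/
def IsTwistingMap (mA : A ⊗[k] A →ₗ[k] A) (mB : B ⊗[k] B →ₗ[k] B)
    (oneA : A) (oneB : B) (R : B ⊗[k] A →ₗ[k] A ⊗[k] B) : Prop :=
  (∀ a : A, R (oneB ⊗ₜ a) = a ⊗ₜ oneB) ∧
  (∀ b : B, R (b ⊗ₜ oneA) = oneA ⊗ₜ b) ∧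
  (∀ (a a' : A) (b : B), R (b ⊗ₜ mA (a ⊗ₜ a')) = rext mA R a' (R (b ⊗ₜ a))) ∧
  (∀ (a : A) (b b' : B), R (mB (b ⊗ₜ b') ⊗ₜ a) = lext mB R b (R (b' ⊗ₜ a)))

/-- The axioms of an L-R-twisted tensor product `A _Q⊗_R B`. -/
def IsLRPair (mA : A ⊗[k] A →ₗ[k] A) (mB : B ⊗[k] B →ₗ[k] B)
    (oneA : A) (oneB : B)
    (Q : A ⊗[k] B →ₗ[k] A ⊗[k] B) (R : B ⊗[k] A →ₗ[k] A ⊗[k] B) : Prop :=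
  IsTwistingMap mA mB oneA oneB R ∧
  (∀ a : A, Q (a ⊗ₜ oneB) = a ⊗ₜ oneB) ∧
  (∀ b : B, Q (oneA ⊗ₜ b) = oneA ⊗ₜ b) ∧
  (∀ (a a' : A) (b : B), Q (mA (a ⊗ₜ a') ⊗ₜ b) = qlext mA Q a (Q (a' ⊗ₜ b))) ∧
  (∀ (a : A) (b b' : B), Q (a ⊗ₜ mB (b ⊗ₜ b')) = qrext mB Q b' (Q (a ⊗ₜ b))) ∧
  (∀ (a : A) (b b' : B), swQ Q b' (R (b ⊗ₜ a)) = swR R b (Q (a ⊗ₜ b'))) ∧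
  (∀ (a a' : A) (b : B), swQ2 Q a' (R (b ⊗ₜ a)) = swR2 R a (Q (a' ⊗ₜ b)))

end LRPair

end LR

namespace LR

section Bialg

variable {k : Type*} [Field k]
variable {H : Type*} [Ring H] [Bialgebra k H]
variable {M : Type*} [AddCommGroup M] [Module k M]

/-- `(M, mM, oneM)` together with the two actions `la`, `ra` is an `H`-bimodule
algebra. -/
def IsBimoduleAlgebra (mM : M ⊗[k] M →ₗ[k] M) (oneM : M)
    (la : H ⊗[k] M →ₗ[k] M) (ra : M ⊗[k] H →ₗ[k] M) : Prop :=
  (∀ m : M, la ((1 : H) ⊗ₜ m) = m) ∧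
  (∀ (g h : H) (m : M), la ((g * h) ⊗ₜ m) = la (g ⊗ₜ la (h ⊗ₜ m))) ∧
  (∀ m : M, ra (m ⊗ₜ (1 : H)) = m) ∧
  (∀ (m : M) (g h : H), ra (m ⊗ₜ (g * h)) = ra (ra (m ⊗ₜ g) ⊗ₜ h)) ∧
  (∀ (h : H) (m : M) (g : H), ra (la (h ⊗ₜ m) ⊗ₜ g) = la (h ⊗ₜ ra (m ⊗ₜ g))) ∧
  (∀ (h : H) (x y : M),
    la (h ⊗ₜ mM (x ⊗ₜ y)) =
      (mM ∘ₗ TensorProduct.map (la ∘ₗ (TensorProduct.mk k H M).flip x)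
        (la ∘ₗ (TensorProduct.mk k H M).flip y)) (Coalgebra.comul (R := k) h)) ∧
  (∀ h : H, la (h ⊗ₜ oneM) = Coalgebra.counit (R := k) h • oneM) ∧
  (∀ (h : H) (x y : M),
    ra (mM (x ⊗ₜ y) ⊗ₜ h) =
      (mM ∘ₗ TensorProduct.map (ra ∘ₗ (TensorProduct.mk k M H) x)
        (ra ∘ₗ (TensorProduct.mk k M H) y)) (Coalgebra.comul (R := k) h)) ∧
  (∀ h : H, ra (oneM ⊗ₜ h) = Coalgebra.counit (R := k) h • oneM)

/-- `(M, mM, oneM)` together with the two coactions `ρl`, `ρr` is an `H`-bicomodule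
algebra. -/
def IsBicomoduleAlgebra (mM : M ⊗[k] M →ₗ[k] M) (oneM : M)
    (ρl : M →ₗ[k] H ⊗[k] M) (ρr : M →ₗ[k] M ⊗[k] H) : Prop :=
  (∀ m : M, (TensorProduct.lid k M)
      ((TensorProduct.map (Coalgebra.counit (R := k)) LinearMap.id) (ρl m)) = m) ∧
  (∀ m : M, (TensorProduct.map (Coalgebra.comul (R := k)) LinearMap.id) (ρl m) =
      (TensorProduct.assoc k H H M).symm
        ((TensorProduct.map LinearMap.id ρl) (ρl m))) ∧
  (∀ m : M, (TensorProduct.rid k M)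
      ((TensorProduct.map LinearMap.id (Coalgebra.counit (R := k))) (ρr m)) = m) ∧
  (∀ m : M, (TensorProduct.map LinearMap.id (Coalgebra.comul (R := k))) (ρr m) =
      (TensorProduct.assoc k M H H)
        ((TensorProduct.map ρr LinearMap.id) (ρr m))) ∧
  (∀ m : M, (TensorProduct.map LinearMap.id ρr) (ρl m) =
      (TensorProduct.assoc k H M H)
        ((TensorProduct.map ρl LinearMap.id) (ρr m))) ∧
  (ρl oneM = (1 : H) ⊗ₜ oneM) ∧
  (∀ x y : M, ρl (mM (x ⊗ₜ y)) =
      tensMul (LinearMap.mul' k H) mM (ρl x ⊗ₜ ρl y)) ∧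
  (ρr oneM = oneM ⊗ₜ (1 : H)) ∧
  (∀ x y : M, ρr (mM (x ⊗ₜ y)) =
      tensMul mM (LinearMap.mul' k H) (ρr x ⊗ₜ ρr y))

variable {P : Type*} [AddCommGroup P] [Module k P]

/-- `R(u ⊗ φ) = u_{[-1]}·φ ⊗ u_{[0]}` built from a left coaction on `P` and a left
action on `M`. -/
def smashR (la : H ⊗[k] M →ₗ[k] M) (ρl : P →ₗ[k] H ⊗[k] P) :
    P ⊗[k] M →ₗ[k] M ⊗[k] P :=
  (TensorProduct.map la LinearMap.id) ∘ₗ ex23 ∘ₗ (TensorProduct.map ρl LinearMap.id)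

/-- `Q(φ ⊗ u) = φ·u_{<1>} ⊗ u_{<0>}` built from a right coaction on `P` and a right
action on `M`. -/
def smashQ (ra : M ⊗[k] H →ₗ[k] M) (ρr : P →ₗ[k] P ⊗[k] H) :
    M ⊗[k] P →ₗ[k] M ⊗[k] P :=
  (TensorProduct.map ra LinearMap.id)
    ∘ₗ (TensorProduct.assoc k M H P).symm.toLinearMap
    ∘ₗ (TensorProduct.map LinearMap.id
        ((TensorProduct.comm k P H).toLinearMap ∘ₗ ρr))

/-- `R(h ⊗ m) = δ(h)₁ · m ⊗ δ(h)₂` (the smash-product twisting map associated to a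
comultiplication-like map `δ`). -/
def RsmashGen (la : H ⊗[k] M →ₗ[k] M) (δ : H →ₗ[k] H ⊗[k] H) :
    H ⊗[k] M →ₗ[k] M ⊗[k] H :=
  (TensorProduct.map la LinearMap.id) ∘ₗ ex23 ∘ₗ (TensorProduct.map δ LinearMap.id)

/-- `Q(m ⊗ h) = m · δ(h)₂ ⊗ δ(h)₁`. -/
def QsmashGen (ra : M ⊗[k] H →ₗ[k] M) (δ : H →ₗ[k] H ⊗[k] H) :
    M ⊗[k] H →ₗ[k] M ⊗[k] H :=
  (TensorProduct.map ra LinearMap.id)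
    ∘ₗ (TensorProduct.assoc k M H H).symm.toLinearMap
    ∘ₗ (TensorProduct.map LinearMap.id ((TensorProduct.comm k H H).toLinearMap ∘ₗ δ))

end Bialg

end LR

namespace LR

section YDL

variable {k : Type*} [Field k]
variable {H : Type*} [Ring H] [Bialgebra k H]
variable {A : Type*} [Ring A] [Algebra k A]
variable {𝒜 : Type*} [Ring 𝒜] [Algebra k 𝒜]

/-- `A` is an algebra in the category `ℒℛ(H)` of Yetter-Drinfeld-Long bimodules:
it is an `H`-bimodule algebra and an `H`-bicomodule algebra, and the four
Yetter-Drinfeld/Long compatibility conditions hold. -/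
def IsYDLAlgebra (la : H ⊗[k] A →ₗ[k] A) (ra : A ⊗[k] H →ₗ[k] A)
    (ρl : A →ₗ[k] H ⊗[k] A) (ρr : A →ₗ[k] A ⊗[k] H) : Prop :=
  IsBimoduleAlgebra (LinearMap.mul' k A) (1 : A) la ra ∧
  IsBicomoduleAlgebra (LinearMap.mul' k A) (1 : A) ρl ρr ∧
  -- left-left Yetter-Drinfeld
  (∀ (h : H) (m : A),
    (TensorProduct.map (LinearMap.mul' k H) LinearMap.id)
        (ex23 ((TensorProduct.map (ρl ∘ₗ la ∘ₗ (TensorProduct.mk k H A).flip m)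
          LinearMap.id) (Coalgebra.comul (R := k) h))) =
      (TensorProduct.map (LinearMap.mul' k H) la)
        ((tensorTensorTensorComm k H H H A)
          ((Coalgebra.comul (R := k) h) ⊗ₜ[k] (ρl m)))) ∧
  -- left-right Long
  (∀ (h : H) (m : A),
    ρr (la (h ⊗ₜ m)) =
      (TensorProduct.map (la ∘ₗ (TensorProduct.mk k H A) h) LinearMap.id) (ρr m)) ∧
  -- right-right Yetter-Drinfeld
  (∀ (h : H) (m : A),
    (TensorProduct.comm k H A)
        ((TensorProduct.map (LinearMap.mul' k H) LinearMap.id)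
          ((TensorProduct.assoc k H H A).symm
            ((TensorProduct.map LinearMap.id
                ((TensorProduct.comm k A H).toLinearMap ∘ₗ ρr ∘ₗ ra
                  ∘ₗ (TensorProduct.mk k A H) m))
              (Coalgebra.comul (R := k) h)))) =
      (TensorProduct.map ra (LinearMap.mul' k H))
        ((tensorTensorTensorComm k A H H H)
          ((ρr m) ⊗ₜ[k] (Coalgebra.comul (R := k) h)))) ∧
  -- right-left Long
  (∀ (m : A) (h : H),
    ρl (ra (m ⊗ₜ h)) =
      (TensorProduct.map LinearMap.id (ra ∘ₗ (TensorProduct.mk k A H).flip h)) (ρl m))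

/-- the left `H`-action `h·(φ ♮ a) = h₁·φ ♮ h₂·a` on `𝒜 ⊗ A`. -/
def Lact (la𝒜 : H ⊗[k] 𝒜 →ₗ[k] 𝒜) (laA : H ⊗[k] A →ₗ[k] A) :
    H ⊗[k] (𝒜 ⊗[k] A) →ₗ[k] 𝒜 ⊗[k] A :=
  (TensorProduct.map la𝒜 laA) ∘ₗ (tensorTensorTensorComm k H H 𝒜 A).toLinearMap
    ∘ₗ (TensorProduct.map (Coalgebra.comul (R := k)) LinearMap.id)

/-- the right `H`-action `(φ ♮ a)·h = φ·h₂ ♮ a·h₁` on `𝒜 ⊗ A`. -/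
def Ract (ra𝒜 : 𝒜 ⊗[k] H →ₗ[k] 𝒜) (raA : A ⊗[k] H →ₗ[k] A) :
    (𝒜 ⊗[k] A) ⊗[k] H →ₗ[k] 𝒜 ⊗[k] A :=
  (TensorProduct.map ra𝒜 raA) ∘ₗ (tensorTensorTensorComm k 𝒜 A H H).toLinearMap
    ∘ₗ (TensorProduct.map LinearMap.id
        ((TensorProduct.comm k H H).toLinearMap ∘ₗ (Coalgebra.comul (R := k))))

/-- the left `H`-coaction `λ(a ♮ h) = a^{(-1)}h₁ ⊗ (a^{(0)} ♮ h₂)` on `A ⊗ H`. -/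
def lamAH (ρlA : A →ₗ[k] H ⊗[k] A) : A ⊗[k] H →ₗ[k] H ⊗[k] (A ⊗[k] H) :=
  (TensorProduct.map (LinearMap.mul' k H) LinearMap.id)
    ∘ₗ (tensorTensorTensorComm k H A H H).toLinearMap
    ∘ₗ (TensorProduct.map ρlA (Coalgebra.comul (R := k)))

/-- the right `H`-coaction `ρ(a ♮ h) = (a^{<0>} ♮ h₁) ⊗ h₂a^{<1>}` on `A ⊗ H`. -/
def rhoAH (ρrA : A →ₗ[k] A ⊗[k] H) : A ⊗[k] H →ₗ[k] (A ⊗[k] H) ⊗[k] H :=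
  (TensorProduct.map LinearMap.id
      ((LinearMap.mul' k H) ∘ₗ (TensorProduct.comm k H H).toLinearMap))
    ∘ₗ (tensorTensorTensorComm k A H H H).toLinearMap
    ∘ₗ (TensorProduct.map ρrA (Coalgebra.comul (R := k)))

end YDL

end LR

namespace LR

section Aux

variable {k : Type*} [Field k]
variable {H : Type*} [Ring H] [Bialgebra k H]
variable {A : Type*} [Ring A] [Algebra k A]
variable {𝒜 : Type*} [Ring 𝒜] [Algebra k 𝒜]
variable (la𝒜 : H ⊗[k] 𝒜 →ₗ[k] 𝒜) (ra𝒜 : 𝒜 ⊗[k] H →ₗ[k] 𝒜)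
variable (laA : H ⊗[k] A →ₗ[k] A) (raA : A ⊗[k] H →ₗ[k] A)
variable (ρlA : A →ₗ[k] H ⊗[k] A) (ρrA : A →ₗ[k] A ⊗[k] H)

/-- Comul-expanded form of the left-hand side multiplication. -/
def ELfun (φ φ' : 𝒜) (a a' : A) (X : (H ⊗[k] H) ⊗[k] H) (Y : H ⊗[k] (H ⊗[k] H)) :
    𝒜 ⊗[k] (A ⊗[k] H) :=
  (TensorProduct.assoc k 𝒜 A H)
    ((TensorProduct.map
        (lrMulGen (LinearMap.mul' k 𝒜) (LinearMap.mul' k A)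
          (smashQ ra𝒜 ρrA) (smashR la𝒜 ρlA))
        ((LinearMap.mul' k H) ∘ₗ (TensorProduct.comm k H H).toLinearMap))
      ((TensorProduct.tensorTensorTensorComm k (𝒜 ⊗[k] A) H (𝒜 ⊗[k] A) H)
        (((TensorProduct.map
            ((TensorProduct.map ra𝒜 raA)
              ∘ₗ (tensorTensorTensorComm k 𝒜 A H H).toLinearMap
              ∘ₗ (TensorProduct.map LinearMap.id (TensorProduct.comm k H H).toLinearMap))
            (LinearMap.id : H →ₗ[k] H))
          ((TensorProduct.assoc k (𝒜 ⊗[k] A) (H ⊗[k] H) H).symm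
            ((φ ⊗ₜ[k] a) ⊗ₜ[k] (TensorProduct.comm k H (H ⊗[k] H)) Y)))
        ⊗ₜ[k]
        ((TensorProduct.map
            ((TensorProduct.map la𝒜 laA)
              ∘ₗ (tensorTensorTensorComm k H H 𝒜 A).toLinearMap)
            (LinearMap.id : H →ₗ[k] H))
          (ex23 (X ⊗ₜ[k] (φ' ⊗ₜ[k] a')))))))

/-- Comul-expanded form of the right-hand side multiplication. -/
def ERfun (φ φ' : 𝒜) (a a' : A) (X : H ⊗[k] (H ⊗[k] H)) (Y : (H ⊗[k] H) ⊗[k] H) :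
    𝒜 ⊗[k] (A ⊗[k] H) :=
  (TensorProduct.map (LinearMap.mul' k 𝒜)
      (((TensorProduct.map (LinearMap.mul' k A)
            ((LinearMap.mul' k H) ∘ₗ (TensorProduct.comm k H H).toLinearMap))
          ∘ₗ (tensorTensorTensorComm k A H A H).toLinearMap
          ∘ₗ (TensorProduct.map
              ((TensorProduct.map raA LinearMap.id)
                ∘ₗ (TensorProduct.assoc k A H H).symm.toLinearMap
                ∘ₗ (TensorProduct.map LinearMap.id (TensorProduct.comm k H H).toLinearMap))
              ((TensorProduct.map laA LinearMap.id) ∘ₗ (ex23 : (H ⊗[k] H) ⊗[k] A →ₗ[k] _)))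
          ∘ₗ lrRearr)
        ∘ₗ (TensorProduct.comm k (A ⊗[k] (H ⊗[k] H)) (A ⊗[k] (H ⊗[k] H))).toLinearMap))
    ((TensorProduct.tensorTensorTensorComm k 𝒜 (A ⊗[k] (H ⊗[k] H)) 𝒜 (A ⊗[k] (H ⊗[k] H)))
      (((TensorProduct.map ra𝒜 LinearMap.id)
          ((TensorProduct.assoc k 𝒜 H (A ⊗[k] (H ⊗[k] H))).symm
            (φ ⊗ₜ[k]
              (TensorProduct.comm k (A ⊗[k] (H ⊗[k] H)) H)
                ((TensorProduct.map LinearMap.id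
                    ((LinearMap.mul' k H) ∘ₗ (TensorProduct.comm k H H).toLinearMap))
                  ((tensorTensorTensorComm k A H (H ⊗[k] H) H) ((ρrA a') ⊗ₜ[k] Y))))))
      ⊗ₜ[k]
      ((TensorProduct.map la𝒜 LinearMap.id)
        (ex23
          (((TensorProduct.map (LinearMap.mul' k H) LinearMap.id)
              ((tensorTensorTensorComm k H A H (H ⊗[k] H)) ((ρlA a) ⊗ₜ[k] X)))
            ⊗ₜ[k] φ')))))


set_option maxHeartbeats 8000000 in
set_option synthInstance.maxHeartbeats 1000000 in
lemma bridgeL (φ φ' : 𝒜) (a a' : A) (h h' : H) :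
    (lrMulGen
        (lrMulGen (LinearMap.mul' k 𝒜) (LinearMap.mul' k A)
          (smashQ ra𝒜 ρrA) (smashR la𝒜 ρlA))
        (LinearMap.mul' k H)
        (QsmashGen (Ract ra𝒜 raA) (Coalgebra.comul (R := k)))
        (RsmashGen (Lact la𝒜 laA) (Coalgebra.comul (R := k))))
      (((φ ⊗ₜ[k] a) ⊗ₜ[k] h) ⊗ₜ[k] ((φ' ⊗ₜ[k] a') ⊗ₜ[k] h')) =
    (TensorProduct.assoc k 𝒜 A H).symm
      (ELfun la𝒜 ra𝒜 laA raA ρlA ρrA φ φ' a a'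
        ((TensorProduct.map (Coalgebra.comul (R := k)) LinearMap.id)
          (Coalgebra.comul (R := k) h))
        ((TensorProduct.map LinearMap.id (Coalgebra.comul (R := k)))
          (Coalgebra.comul (R := k) h'))) := by
  simp only [lrMulGen, lrRearr, QsmashGen, RsmashGen, smashQ, smashR, Ract, Lact, ex23, ELfun,
    LinearMap.comp_apply, TensorProduct.map_tmul, LinearMap.id_coe, id_eq,
    TensorProduct.comm_tmul, TensorProduct.assoc_tmul, TensorProduct.assoc_symm_tmul,
    LinearEquiv.coe_coe, tensorTensorTensorComm_tmul, LinearMap.coe_comp, Function.comp_apply]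
  generalize Coalgebra.comul (R := k) h = t
  generalize Coalgebra.comul (R := k) h' = s
  induction t using TensorProduct.induction_on with
  | zero => simp only [map_zero, tmul_zero, zero_tmul]
  | add u v hu hv =>
      simp only [map_add, add_tmul, tmul_add, LinearMap.add_apply] at hu hv ⊢
      rw [hu, hv]
  | tmul u x₃ =>
    induction s using TensorProduct.induction_on with
    | zero => simp only [map_zero, tmul_zero, zero_tmul]
    | add u' v' hu hv =>
        simp only [map_add, add_tmul, tmul_add, LinearMap.add_apply] at hu hv ⊢
        rw [hu, hv]
    | tmul y₁ w =>
      simp only [TensorProduct.map_tmul, LinearMap.id_coe, id_eq, TensorProduct.comm_tmul,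
        TensorProduct.assoc_tmul, TensorProduct.assoc_symm_tmul, LinearEquiv.coe_coe,
        tensorTensorTensorComm_tmul, LinearMap.coe_comp, Function.comp_apply]
      exact ((TensorProduct.assoc k 𝒜 A H).symm_apply_apply _).symm

set_option maxHeartbeats 8000000 in
set_option synthInstance.maxHeartbeats 1000000 in
lemma bridgeR (φ φ' : 𝒜) (a a' : A) (h h' : H) :
    (lrMulGen (LinearMap.mul' k 𝒜)
        (lrMulGen (LinearMap.mul' k A) (LinearMap.mul' k H)
          (QsmashGen raA (Coalgebra.comul (R := k)))
          (RsmashGen laA (Coalgebra.comul (R := k))))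
        (smashQ ra𝒜 (rhoAH ρrA)) (smashR la𝒜 (lamAH ρlA)))
      ((φ ⊗ₜ[k] (a ⊗ₜ[k] h)) ⊗ₜ[k] (φ' ⊗ₜ[k] (a' ⊗ₜ[k] h'))) =
    ERfun la𝒜 ra𝒜 laA raA ρlA ρrA φ φ' a a'
      ((TensorProduct.map LinearMap.id (Coalgebra.comul (R := k)))
        (Coalgebra.comul (R := k) h))
      ((TensorProduct.map (Coalgebra.comul (R := k)) LinearMap.id)
        (Coalgebra.comul (R := k) h')) := by
  simp only [lrMulGen, lrRearr, QsmashGen, RsmashGen, smashQ, smashR, rhoAH, lamAH, ex23, ERfun,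
    LinearMap.comp_apply, TensorProduct.map_tmul, LinearMap.id_coe, id_eq,
    TensorProduct.comm_tmul, TensorProduct.assoc_tmul, TensorProduct.assoc_symm_tmul,
    LinearEquiv.coe_coe, tensorTensorTensorComm_tmul, LinearMap.coe_comp, Function.comp_apply]
  generalize Coalgebra.comul (R := k) h = t
  generalize Coalgebra.comul (R := k) h' = s
  induction t using TensorProduct.induction_on with
  | zero => simp only [map_zero, tmul_zero, zero_tmul]
  | add u v hu hv =>
      simp only [map_add, add_tmul, tmul_add, LinearMap.add_apply] at hu hv ⊢
      rw [hu, hv]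
  | tmul x₁ v =>
    induction s using TensorProduct.induction_on with
    | zero => simp only [map_zero, tmul_zero, zero_tmul]
    | add u' v' hu hv =>
        simp only [map_add, add_tmul, tmul_add, LinearMap.add_apply] at hu hv ⊢
        rw [hu, hv]
    | tmul w' y₃ =>
      generalize ρrA a' = r
      generalize ρlA a = p
      induction r using TensorProduct.induction_on with
      | zero => simp only [map_zero, tmul_zero, zero_tmul]
      | add q₁ q₂ hq₁ hq₂ =>
          simp only [map_add, add_tmul, tmul_add, LinearMap.add_apply] at hq₁ hq₂ ⊢
          rw [hq₁, hq₂]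
      | tmul r₁ r₂ =>
        induction p using TensorProduct.induction_on with
        | zero => simp only [map_zero, tmul_zero, zero_tmul]
        | add q₁ q₂ hq₁ hq₂ =>
            simp only [map_add, add_tmul, tmul_add, LinearMap.add_apply] at hq₁ hq₂ ⊢
            rw [hq₁, hq₂]
        | tmul p₁ p₂ =>
          simp only [TensorProduct.map_tmul, LinearMap.id_coe, id_eq, TensorProduct.comm_tmul,
            TensorProduct.assoc_tmul, TensorProduct.assoc_symm_tmul, LinearEquiv.coe_coe,
            tensorTensorTensorComm_tmul, LinearMap.coe_comp, Function.comp_apply]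

set_option maxHeartbeats 8000000 in
set_option synthInstance.maxHeartbeats 1000000 in
lemma keyLem (h𝒜 : IsBimoduleAlgebra (LinearMap.mul' k 𝒜) (1 : 𝒜) la𝒜 ra𝒜)
    (hA : IsYDLAlgebra laA raA ρlA ρrA)
    (φ φ' : 𝒜) (a a' : A) (X Y : H ⊗[k] (H ⊗[k] H)) :
    ELfun la𝒜 ra𝒜 laA raA ρlA ρrA φ φ' a a' ((TensorProduct.assoc k H H H).symm X) Y =
    ERfun la𝒜 ra𝒜 laA raA ρlA ρrA φ φ' a a' X ((TensorProduct.assoc k H H H).symm Y) := by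
  simp only [ELfun, ERfun]
  induction X using TensorProduct.induction_on with
  | zero => simp only [map_zero, tmul_zero, zero_tmul]
  | add u v hu hv =>
      simp only [map_add, add_tmul, tmul_add, LinearMap.add_apply] at hu hv ⊢
      rw [hu, hv]
  | tmul x₁ c =>
    induction c using TensorProduct.induction_on with
    | zero => simp only [map_zero, tmul_zero, zero_tmul]
    | add u v hu hv =>
        simp only [map_add, add_tmul, tmul_add, LinearMap.add_apply] at hu hv ⊢
        rw [hu, hv]
    | tmul x₂ x₃ =>
      induction Y using TensorProduct.induction_on with
      | zero => simp only [map_zero, tmul_zero, zero_tmul]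
      | add u v hu hv =>
          simp only [map_add, add_tmul, tmul_add, LinearMap.add_apply] at hu hv ⊢
          rw [hu, hv]
      | tmul y₁ c' =>
        induction c' using TensorProduct.induction_on with
        | zero => simp only [map_zero, tmul_zero, zero_tmul]
        | add u v hu hv =>
            simp only [map_add, add_tmul, tmul_add, LinearMap.add_apply] at hu hv ⊢
            rw [hu, hv]
        | tmul y₂ y₃ =>
          simp only [lrMulGen, lrRearr, smashQ, smashR, ex23,
            LinearMap.comp_apply, TensorProduct.map_tmul, LinearMap.id_coe, id_eq,
            TensorProduct.comm_tmul, TensorProduct.assoc_tmul, TensorProduct.assoc_symm_tmul,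
            LinearEquiv.coe_coe, tensorTensorTensorComm_tmul, LinearMap.coe_comp,
            Function.comp_apply]
          rw [hA.2.2.2.1 x₂ a', hA.2.2.2.2.2 a y₂]
          generalize ρrA a' = r
          generalize ρlA a = p
          induction r using TensorProduct.induction_on with
          | zero => simp only [map_zero, tmul_zero, zero_tmul]
          | add q₁ q₂ hq₁ hq₂ =>
              simp only [map_add, add_tmul, tmul_add, LinearMap.add_apply] at hq₁ hq₂ ⊢
              rw [hq₁, hq₂]
          | tmul r₁ r₂ =>
            induction p using TensorProduct.induction_on with
            | zero => simp only [map_zero, tmul_zero, zero_tmul]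
            | add q₁ q₂ hq₁ hq₂ =>
                simp only [map_add, add_tmul, tmul_add, LinearMap.add_apply] at hq₁ hq₂ ⊢
                rw [hq₁, hq₂]
            | tmul p₁ p₂ =>
              simp only [LinearMap.comp_apply, TensorProduct.map_tmul, LinearMap.id_coe, id_eq,
                TensorProduct.comm_tmul, TensorProduct.assoc_tmul, TensorProduct.assoc_symm_tmul,
                LinearEquiv.coe_coe, tensorTensorTensorComm_tmul, LinearMap.coe_comp,
                Function.comp_apply, TensorProduct.mk_apply, LinearMap.flip_apply,
                LinearMap.mul'_apply]
              rw [h𝒜.2.2.2.1 φ y₃ r₂, h𝒜.2.1 p₁ x₁ φ']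

end Aux

/-- For `H` a bialgebra, `A` an algebra in `ℒℛ(H)` and `𝒜` an
`H`-bimodule algebra, the algebras `(𝒜 ♮ A) ♮ H` and `𝒜 ♮ (A ♮ H)` coincide under
the canonical identification `(𝒜 ⊗ A) ⊗ H ≃ 𝒜 ⊗ (A ⊗ H)`. -/
theorem iterated_lr_smash_products_coincide
    {k : Type*} [Field k] {H A 𝒜 : Type*}
    [Ring H] [Bialgebra k H] [Ring A] [Algebra k A] [Ring 𝒜] [Algebra k 𝒜]
    (la𝒜 : H ⊗[k] 𝒜 →ₗ[k] 𝒜) (ra𝒜 : 𝒜 ⊗[k] H →ₗ[k] 𝒜)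
    (h𝒜 : IsBimoduleAlgebra (LinearMap.mul' k 𝒜) (1 : 𝒜) la𝒜 ra𝒜)
    (laA : H ⊗[k] A →ₗ[k] A) (raA : A ⊗[k] H →ₗ[k] A)
    (ρlA : A →ₗ[k] H ⊗[k] A) (ρrA : A →ₗ[k] A ⊗[k] H)
    (hA : IsYDLAlgebra laA raA ρlA ρrA) :
    (TensorProduct.assoc k 𝒜 A H).toLinearMap ∘ₗ
        lrMulGen
          (lrMulGen (LinearMap.mul' k 𝒜) (LinearMap.mul' k A)
            (smashQ ra𝒜 ρrA) (smashR la𝒜 ρlA))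
          (LinearMap.mul' k H)
          (QsmashGen (Ract ra𝒜 raA) (Coalgebra.comul (R := k)))
          (RsmashGen (Lact la𝒜 laA) (Coalgebra.comul (R := k))) =
      lrMulGen (LinearMap.mul' k 𝒜)
          (lrMulGen (LinearMap.mul' k A) (LinearMap.mul' k H)
            (QsmashGen raA (Coalgebra.comul (R := k)))
            (RsmashGen laA (Coalgebra.comul (R := k))))
          (smashQ ra𝒜 (rhoAH ρrA)) (smashR la𝒜 (lamAH ρlA)) ∘ₗ
        TensorProduct.map (TensorProduct.assoc k 𝒜 A H).toLinearMap
          (TensorProduct.assoc k 𝒜 A H).toLinearMap := by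
  ext φ a h φ' a' h'
  simp only [TensorProduct.AlgebraTensorModule.curry_apply, TensorProduct.curry_apply,
    LinearMap.coe_restrictScalars, LinearMap.coe_comp, Function.comp_apply, LinearEquiv.coe_coe,
    TensorProduct.map_tmul, TensorProduct.assoc_tmul]
  rw [bridgeL la𝒜 ra𝒜 laA raA ρlA ρrA φ φ' a a' h h',
      bridgeR la𝒜 ra𝒜 laA raA ρlA ρrA φ φ' a a' h h',
      LinearEquiv.apply_symm_apply]
  have hco : ∀ g : H, (TensorProduct.map (Coalgebra.comul (R := k)) LinearMap.id)
      (Coalgebra.comul (R := k) g) = (TensorProduct.assoc k H H H).symm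
      ((TensorProduct.map LinearMap.id (Coalgebra.comul (R := k))) (Coalgebra.comul g)) := by
    intro g
    simpa only [LinearMap.rTensor, LinearMap.lTensor] using
      (Coalgebra.coassoc_symm_apply (R := k) g).symm
  rw [hco h, hco h']
  exact keyLem la𝒜 ra𝒜 laA raA ρlA ρrA h𝒜 hA φ φ' a a' _ _

end LR
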